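/- arXiv:1610.08814 — 8 statements merged into one kernel-verified Lean document; each statement's English description precedes it below -/
import Mathlib

section
/- Let A = {A(x)}_{x∈Ω} and B = {B(y)}_{y∈Ω'} be POVMs on a finite-dimensional Hilbert space H. Then every pair of states distinguishable by B is also distinguishable by A if and only if the complex linear span of {B(y)} is contained in the complex linear span of {A(x)}. -/
open Matrix
open scoped ComplexOrder

abbrev Mat (d : ℕ) := Matrix (Fin d) (Fin d) ℂ

/-- A quantum state (density operator). -/
def IsState {d : ℕ} (ρ : Mat d) : Prop := ρ.PosSemidef ∧ ρ.trace = 1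

/-- A POVM (observable with finite outcome set). -/
def IsPOVM {d : ℕ} {ι : Type} [Fintype ι] (A : ι → Mat d) : Prop :=
  (∀ x, (A x).PosSemidef) ∧ ∑ x, A x = 1

/-- The pair of states `ρ₁, ρ₂` is distinguishable by the observable `A`. -/
def Distinguishes {d : ℕ} {ι : Type} [Fintype ι] (A : ι → Mat d) (ρ₁ ρ₂ : Mat d) : Prop :=
  ∃ x, (ρ₁ * A x).trace ≠ (ρ₂ * A x).trace

/-- Informational completeness of an observable. -/
def InfoComplete {d : ℕ} {ι : Type} [Fintype ι] (A : ι → Mat d) : Prop :=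
  ∀ ρ₁ ρ₂ : Mat d, IsState ρ₁ → IsState ρ₂ →
    (∀ x, (ρ₁ * A x).trace = (ρ₂ * A x).trace) → ρ₁ = ρ₂

/-! If some `B y` lies outside the span of the `A x`, trace duality gives a matrix `M` with
`tr (M A x) = 0` for all `x` but `tr (M B y) ≠ 0`. As the `A x` are Hermitian, the real or the
imaginary part of `M` is a Hermitian `H` with the same property, and `∑ A x = 1` forces
`tr H = 0`. For `c > ‖H‖` the states proportional to `c • 1 + H` and `c • 1 - H` then agree on
every `A x` but not on `B y`. Conversely, `X ↦ tr ((ρ₁ - ρ₂) X)` is linear, so if it vanishes on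
every `A x` it vanishes on their span. -/

namespace Matrix

theorem exists_trace_mul_eq {n K : Type*} [Fintype n] [DecidableEq n] [Field K]
    (f : Module.Dual K (Matrix n n K)) : ∃ M : Matrix n n K, ∀ X, f X = (M * X).trace := by
  let B : LinearMap.BilinForm K (Matrix n n K) :=
    (LinearMap.mul K (Matrix n n K)).compr₂ (traceLinearMap n K K)
  have hB : B.Nondegenerate :=
    ⟨fun M hM => ext_iff_trace_mul_right.mpr fun X => by simpa [B] using hM X,
     fun M hM => ext_iff_trace_mul_left.mpr fun X => by simpa [B] using hM X⟩
  exact ⟨(B.toDual hB).symm f, fun X => (B.apply_toDual_symm_apply (hB := hB) f X).symm⟩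

theorem trace_mul_eq_zero_of_mem_span {n R ι : Type*} [Fintype n] [CommSemiring R]
    {A : ι → Matrix n n R} {M X : Matrix n n R} (hMA : ∀ x, (M * A x).trace = 0)
    (hX : X ∈ Submodule.span R (Set.range A)) : (M * X).trace = 0 := by
  have hle : Submodule.span R (Set.range A) ≤
      LinearMap.ker ((traceLinearMap n R R).comp (LinearMap.mulLeft R M)) := by
    rw [Submodule.span_le]
    rintro _ ⟨x, rfl⟩
    exact hMA x
  exact hle hX

theorem IsHermitian.trace_conjTranspose_mul {n : Type*} [Fintype n] {A : Matrix n n ℂ}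
    (hA : A.IsHermitian) (M : Matrix n n ℂ) : (Mᴴ * A).trace = star (M * A).trace := by
  rw [← trace_conjTranspose, conjTranspose_mul, hA.eq, trace_mul_comm]

theorem exists_isHermitian_trace_mul_ne_zero_of_notMem_span {n ι : Type*} [Fintype n]
    [DecidableEq n] {A : ι → Matrix n n ℂ} (hA : ∀ x, (A x).IsHermitian) {v : Matrix n n ℂ}
    (hv : v ∉ Submodule.span ℂ (Set.range A)) :
    ∃ H : Matrix n n ℂ, H.IsHermitian ∧ (∀ x, (H * A x).trace = 0) ∧ (H * v).trace ≠ 0 := by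
  obtain ⟨f, hfv, hf⟩ := Submodule.exists_dual_map_eq_bot_of_notMem hv inferInstance
  obtain ⟨M, hM⟩ := exists_trace_mul_eq f
  have hMA : ∀ x, (M * A x).trace = 0 := fun x => by
    have hfx := Submodule.mem_map_of_mem (f := f)
      (Submodule.subset_span (Set.mem_range_self (f := A) x))
    rwa [hf, Submodule.mem_bot, hM] at hfx
  have hMstarA : ∀ x, (star M * A x).trace = 0 := fun x => by
    rw [star_eq_conjTranspose, (hA x).trace_conjTranspose_mul, hMA, star_zero]
  have hparts : ∀ x, ((realPart M : Matrix n n ℂ) * A x).trace = 0 ∧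
      ((imaginaryPart M : Matrix n n ℂ) * A x).trace = 0 := fun x => by
    simp [realPart_apply_coe, imaginaryPart_apply_coe, add_mul, sub_mul, hMA, hMstarA]
  by_contra! h
  apply hfv
  rw [hM, ← realPart_add_I_smul_imaginaryPart M, add_mul, trace_add, smul_mul_assoc, trace_smul,
    h _ (realPart M).2 fun x => (hparts x).1, h _ (imaginaryPart M).2 fun x => (hparts x).2,
    smul_zero, add_zero]

open scoped MatrixOrder Matrix.Norms.L2Operator in
theorem IsHermitian.exists_posSemidef_smul_one_add_sub {n : Type*} [Fintype n] [DecidableEq n]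
    {H : Matrix n n ℂ} (hH : H.IsHermitian) :
    ∃ c : ℝ, 0 < c ∧ ((c : ℂ) • 1 + H).PosSemidef ∧ ((c : ℂ) • 1 - H).PosSemidef := by
  have hsmul : algebraMap ℝ (Matrix n n ℂ) ‖H‖ = (‖H‖ : ℂ) • 1 := by
    rw [Algebra.algebraMap_eq_smul_one, ← Complex.coe_smul]
  have hle := IsSelfAdjoint.le_algebraMap_norm_self (a := H) hH
  have hge := IsSelfAdjoint.neg_algebraMap_norm_le_self (a := H) hH
  rw [hsmul, le_iff] at hle
  rw [hsmul, le_iff, sub_neg_eq_add, add_comm] at hge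
  refine ⟨‖H‖ + 1, by positivity, ?_, ?_⟩
  · simpa [add_smul, add_right_comm] using hge.add PosSemidef.one
  · simpa [add_smul, add_sub_right_comm] using hle.add PosSemidef.one

end Matrix

theorem isState_inv_trace_smul {d : ℕ} {P : Mat d} (hP : P.PosSemidef) (htr : P.trace ≠ 0) :
    IsState (P.trace⁻¹ • P) :=
  ⟨hP.smul (inv_nonneg.mpr hP.trace_nonneg), by rw [trace_smul, smul_eq_mul, inv_mul_cancel₀ htr]⟩

theorem exists_isState_sub_eq_smul {d : ℕ} (hd : 0 < d) {H : Mat d} (hH : H.IsHermitian)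
    (htr : H.trace = 0) :
    ∃ ρ₁ ρ₂ : Mat d, IsState ρ₁ ∧ IsState ρ₂ ∧ ∃ t : ℂ, t ≠ 0 ∧ ρ₁ - ρ₂ = t • H := by
  obtain ⟨c, hc, hP, hN⟩ := hH.exists_posSemidef_smul_one_add_sub
  have hτ : ((c : ℂ) • 1 + H).trace = c * d ∧ ((c : ℂ) • 1 - H).trace = c * d := by
    simp [htr]
  have hτ0 : (c * d : ℂ) ≠ 0 :=
    mul_ne_zero (by exact_mod_cast hc.ne') (by exact_mod_cast hd.ne')
  refine ⟨_, _, isState_inv_trace_smul hP (hτ.1 ▸ hτ0), isState_inv_trace_smul hN (hτ.2 ▸ hτ0),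
    2 * ((c : ℂ) * d)⁻¹, mul_ne_zero two_ne_zero (inv_ne_zero hτ0), ?_⟩
  rw [hτ.1, hτ.2, ← smul_sub, add_sub_sub_cancel, ← two_smul ℂ H, smul_smul, mul_comm]

theorem distinguishes_iff_exists_trace_sub_mul_ne_zero {d : ℕ} {ι : Type} [Fintype ι]
    {A : ι → Mat d} {ρ₁ ρ₂ : Mat d} :
    Distinguishes A ρ₁ ρ₂ ↔ ∃ x, ((ρ₁ - ρ₂) * A x).trace ≠ 0 := by
  simp only [Distinguishes, sub_mul, trace_sub, sub_ne_zero]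

theorem stmt0_general {d : ℕ} (hd : 0 < d) {ι κ : Type} [Fintype ι] [Fintype κ]
    (A : ι → Mat d) (B : κ → Mat d) (hA : IsPOVM A) :
    (∀ ρ₁ ρ₂ : Mat d, IsState ρ₁ → IsState ρ₂ →
        Distinguishes B ρ₁ ρ₂ → Distinguishes A ρ₁ ρ₂) ↔
      Submodule.span ℂ (Set.range B) ≤ Submodule.span ℂ (Set.range A) := by
  refine ⟨fun h => Submodule.span_le.mpr ?_, fun hspan ρ₁ ρ₂ _ _ hB => ?_⟩
  · rintro _ ⟨y, rfl⟩
    by_contra hy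
    obtain ⟨H, hH, hHA, hHB⟩ :=
      exists_isHermitian_trace_mul_ne_zero_of_notMem_span (fun x => (hA.1 x).1) hy
    have htr : H.trace = 0 := by
      rw [← mul_one H, ← hA.2, Finset.mul_sum, trace_sum]
      exact Finset.sum_eq_zero fun x _ => hHA x
    obtain ⟨ρ₁, ρ₂, h₁, h₂, t, ht, hρ⟩ := exists_isState_sub_eq_smul hd hH htr
    have hBρ : Distinguishes B ρ₁ ρ₂ := distinguishes_iff_exists_trace_sub_mul_ne_zero.mpr
      ⟨y, by simpa [hρ, smul_mul_assoc] using ⟨ht, hHB⟩⟩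
    obtain ⟨x, hx⟩ := distinguishes_iff_exists_trace_sub_mul_ne_zero.mp (h ρ₁ ρ₂ h₁ h₂ hBρ)
    simp [hρ, hHA] at hx
  · by_contra hA'
    have hA0 : ∀ x, ((ρ₁ - ρ₂) * A x).trace = 0 := by
      simpa [distinguishes_iff_exists_trace_sub_mul_ne_zero] using hA'
    obtain ⟨y, hy⟩ := distinguishes_iff_exists_trace_sub_mul_ne_zero.mp hB
    exact hy (trace_mul_eq_zero_of_mem_span hA0 (hspan (Submodule.subset_span ⟨y, rfl⟩)))

theorem stmt0 {d : ℕ} (hd : 0 < d) {ι κ : Type} [Fintype ι] [Fintype κ]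
    (A : ι → Mat d) (B : κ → Mat d) (hA : IsPOVM A) (hB : IsPOVM B) :
    (∀ ρ₁ ρ₂ : Mat d, IsState ρ₁ → IsState ρ₂ →
        Distinguishes B ρ₁ ρ₂ → Distinguishes A ρ₁ ρ₂) ↔
      Submodule.span ℂ (Set.range B) ≤ Submodule.span ℂ (Set.range A) :=
  stmt0_general hd A B hA
end

section
/- A POVM A is a minimal element of the state-distinction preorder (i.e., A ≾_i B for every POVM B) if and only if A is trivial, meaning each effect A(x) = p_x · 1 for nonnegative reals p_x summing to 1. -/
open Matrix
open scoped ComplexOrder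

/-- A trivial observable: each effect is a nonnegative multiple of the identity,
with coefficients summing to one. -/
def TrivialPOVM {d : ℕ} {ι : Type} [Fintype ι] (A : ι → Mat d) : Prop :=
  ∃ p : ι → ℝ, (∀ x, 0 ≤ p x) ∧ ∑ x, p x = 1 ∧ ∀ x, A x = (p x : ℂ) • 1

/-! A trivial POVM assigns to every state the same outcome distribution `p`, so it distinguishes
nothing; in particular the one-outcome POVM `1` distinguishes nothing. Hence a minimal `A`
distinguishes no pair of states: `tr (ρ A(x))` is the same number `c x` for all states `ρ`.
Testing this on the pure states `|v⟩⟨v| / ⟨v, v⟩` gives `⟨v, A(x) v⟩ = c x ⟨v, v⟩` for all `v`,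
and over `ℂ` a quadratic form determines the operator, so `A(x) = c x • 1`. -/

namespace Matrix

variable {n : Type*} [Fintype n] [DecidableEq n]

theorem eq_smul_one_of_dotProduct_mulVec_eq {M : Matrix n n ℂ} {c : ℂ}
    (h : ∀ v : n → ℂ, star v ⬝ᵥ (M *ᵥ v) = c * (star v ⬝ᵥ v)) : M = c • 1 := by
  refine toEuclideanLin.injective <| (ext_inner_map _ _).mp fun x => ?_
  rw [EuclideanSpace.inner_eq_star_dotProduct, EuclideanSpace.inner_eq_star_dotProduct,
    ofLp_toLpLin, ofLp_toLpLin, toLin'_apply, toLin'_apply, dotProduct_comm, star_dotProduct, h,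
    smul_mulVec, one_mulVec, star_smul, dotProduct_smul, star_mul', dotProduct_comm x,
    ← star_dotProduct, smul_eq_mul]

omit [DecidableEq n] in
theorem trace_vecMulVec_star_mul (v : n → ℂ) (M : Matrix n n ℂ) :
    (vecMulVec v (star v) * M).trace = star v ⬝ᵥ (M *ᵥ v) := by
  rw [vecMulVec_mul, trace_vecMulVec, dotProduct_comm, dotProduct_mulVec]

end Matrix

section

variable {d : ℕ} {ι : Type} [Fintype ι]

noncomputable def pureState (v : Fin d → ℂ) : Mat d :=
  (star v ⬝ᵥ v)⁻¹ • vecMulVec v (star v)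

theorem trace_pureState_mul (v : Fin d → ℂ) (M : Mat d) :
    (pureState v * M).trace = (star v ⬝ᵥ v)⁻¹ * (star v ⬝ᵥ (M *ᵥ v)) := by
  rw [pureState, smul_mul_assoc, trace_smul, trace_vecMulVec_star_mul, smul_eq_mul]

theorem isState_pureState {v : Fin d → ℂ} (hv : v ≠ 0) : IsState (pureState v) := by
  refine ⟨(posSemidef_vecMulVec_self_star v).smul
    (inv_nonneg.mpr (dotProduct_star_self_nonneg v)), ?_⟩
  rw [pureState, trace_smul, trace_vecMulVec, dotProduct_comm v, smul_eq_mul,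
    inv_mul_cancel₀ (dotProduct_star_self_eq_zero.not.mpr hv)]

theorem exists_isState (hd : 0 < d) : ∃ ρ : Mat d, IsState ρ :=
  ⟨_, isState_pureState (Pi.single_ne_zero_iff.mpr one_ne_zero :
    Pi.single (⟨0, hd⟩ : Fin d) (1 : ℂ) ≠ 0)⟩

theorem eq_smul_one_of_trace_mul_eq {M : Mat d} {c : ℂ}
    (h : ∀ ρ, IsState ρ → (ρ * M).trace = c) : M = c • 1 := by
  refine eq_smul_one_of_dotProduct_mulVec_eq fun v => ?_
  by_cases hv : v = 0
  · simp [hv]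
  · have hv' : star v ⬝ᵥ v ≠ 0 := dotProduct_star_self_eq_zero.not.mpr hv
    have := h _ (isState_pureState hv)
    rw [trace_pureState_mul, inv_mul_eq_iff_eq_mul₀ hv'] at this
    rw [this, mul_comm]

theorem TrivialPOVM.isPOVM {A : ι → Mat d} (hA : TrivialPOVM A) : IsPOVM A := by
  obtain ⟨p, hp0, hp1, hp⟩ := hA
  obtain rfl : A = fun x => (p x : ℂ) • 1 := funext hp
  refine ⟨fun x => PosSemidef.one.smul (Complex.zero_le_real.mpr (hp0 x)), ?_⟩
  rw [← Finset.sum_smul, ← Complex.ofReal_sum, hp1, Complex.ofReal_one, one_smul]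

theorem trivialPOVM_unit : TrivialPOVM (fun _ : Unit => (1 : Mat d)) :=
  ⟨fun _ => 1, fun _ => zero_le_one, by simp, fun _ => by simp⟩

theorem TrivialPOVM.not_distinguishes {A : ι → Mat d} (hA : TrivialPOVM A) {ρ₁ ρ₂ : Mat d}
    (h₁ : IsState ρ₁) (h₂ : IsState ρ₂) : ¬ Distinguishes A ρ₁ ρ₂ := by
  obtain ⟨p, -, -, hp⟩ := hA
  obtain rfl : A = fun x => (p x : ℂ) • 1 := funext hp
  rintro ⟨x, hx⟩
  simp only [mul_smul_comm, mul_one, trace_smul, h₁.2, h₂.2] at hx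
  exact hx rfl

theorem trivialPOVM_of_eq_smul_one (hd : 0 < d) {A : ι → Mat d} (hA : IsPOVM A) {c : ι → ℂ}
    (hc : ∀ x, A x = c x • 1) : TrivialPOVM A := by
  have hc0 : ∀ x, 0 ≤ c x := fun x => by
    simpa [hc x] using (hA.1 x).diag_nonneg (i := ⟨0, hd⟩)
  have hc_re : ∀ x, ((c x).re : ℂ) = c x := fun x =>
    (Complex.eq_re_of_ofReal_le (by rw [Complex.ofReal_zero]; exact hc0 x)).symm
  refine ⟨fun x => (c x).re, fun x => (Complex.nonneg_iff.mp (hc0 x)).1, ?_,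
    fun x => by rw [hc_re, hc]⟩
  have hsum : (∑ x, c x) • (1 : Mat d) = 1 := by
    simpa only [Finset.sum_smul, ← hc] using hA.2
  have hentry := congrFun (congrFun hsum ⟨0, hd⟩) ⟨0, hd⟩
  apply Complex.ofReal_injective
  simpa [hc_re] using hentry

theorem trivialPOVM_of_forall_not_distinguishes (hd : 0 < d) {A : ι → Mat d} (hA : IsPOVM A)
    (h : ∀ ρ₁ ρ₂, IsState ρ₁ → IsState ρ₂ → ¬ Distinguishes A ρ₁ ρ₂) : TrivialPOVM A := by
  obtain ⟨ρ₀, hρ₀⟩ := exists_isState hd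
  refine trivialPOVM_of_eq_smul_one hd hA (c := fun x => (ρ₀ * A x).trace) fun x =>
    eq_smul_one_of_trace_mul_eq fun ρ hρ => ?_
  by_contra hne
  exact h ρ ρ₀ hρ hρ₀ ⟨x, hne⟩

end

theorem stmt3 {d : ℕ} (hd : 0 < d) {ι : Type} [Fintype ι]
    (A : ι → Mat d) (hA : IsPOVM A) :
    (∀ (κ : Type) [Fintype κ] (B : κ → Mat d), IsPOVM B →
        ∀ ρ₁ ρ₂ : Mat d, IsState ρ₁ → IsState ρ₂ →
          Distinguishes A ρ₁ ρ₂ → Distinguishes B ρ₁ ρ₂) ↔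
      TrivialPOVM A := by
  constructor
  · intro hmin
    refine trivialPOVM_of_forall_not_distinguishes hd hA fun ρ₁ ρ₂ h₁ h₂ hdist => ?_
    exact trivialPOVM_unit.not_distinguishes h₁ h₂
      (hmin Unit _ trivialPOVM_unit.isPOVM ρ₁ ρ₂ h₁ h₂ hdist)
  · intro hA κ _ B _ ρ₁ ρ₂ h₁ h₂ hdist
    exact absurd hdist (hA.not_distinguishes h₁ h₂)
end

section
/- Let A be an informationally complete POVM on finite-dimensional H and let Λ be a channel compatible with A (i.e., there exist Kraus operators K_{x,i} with A(x) = Σ_i K_{x,i}* K_{x,i} and Λ(ρ) = Σ_{x,i} K_{x,i} ρ K_{x,i}*). Then the fixed point set of the dual map Λ* is the scalar multiples of the identity: Fix(Λ*) = ℂ·1. -/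
open Matrix
open scoped ComplexOrder

/-!
Since `Λ*` is unital and commutes with `ᴴ`, it suffices to treat a Hermitian fixed point `Z`.
If its largest and smallest eigenvalues `M > m` differed, then `M - Z` and `Z - m` would be
positive fixed points, and the kernel of a positive fixed point `P` is invariant under every Kraus
operator, because `⟨v, Λ*(P) v⟩ = ∑ ⟨K v, P K v⟩`. For eigenvectors `Z u = M u`, `Z w = m w` this
gives `⟨w, A(x) u⟩ = ∑ᵢ ⟨K w, K u⟩ = 0` for all `x`, so the rank-one operator `|u⟩⟨w|` has
vanishing statistics. Informational completeness forces it to vanish: writing a Hermitian `Y` with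
vanishing statistics as `Y⁺ - Y⁻`, the normalised parts are states with equal statistics.
-/

open scoped MatrixOrder ComplexStarModule

theorem Submodule.le_of_forall_isSelfAdjoint_mem {E : Type*} [AddCommGroup E] [Module ℂ E]
    [StarAddMonoid E] [StarModule ℂ E] {S T : Submodule ℂ E} (hS : ∀ a ∈ S, star a ∈ S)
    (hST : ∀ a ∈ S, IsSelfAdjoint a → a ∈ T) : S ≤ T := by
  intro a ha
  have hre : (ℜ a : E) ∈ S := by
    rw [realPart_apply_coe]
    exact S.smul_of_tower_mem _ (S.add_mem ha (hS a ha))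
  have him : (ℑ a : E) ∈ S := by
    rw [imaginaryPart_apply_coe]
    exact S.smul_mem _ (S.smul_of_tower_mem _ (S.sub_mem ha (hS a ha)))
  rw [← realPart_add_I_smul_imaginaryPart a]
  exact T.add_mem (hST _ hre (ℜ a).2) (T.smul_mem _ (hST _ him (ℑ a).2))

namespace Matrix

variable {n : Type*} [Fintype n]

theorem star_dotProduct_conjTranspose_mul_mul_mulVec (B C : Matrix n n ℂ) (u w : n → ℂ) :
    star w ⬝ᵥ ((Bᴴ * C * B) *ᵥ u) = star (B *ᵥ w) ⬝ᵥ (C *ᵥ (B *ᵥ u)) := by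
  rw [← mulVec_mulVec, ← mulVec_mulVec, dotProduct_mulVec, ← star_mulVec]

theorem IsHermitian.star_dotProduct_eq_zero_of_mulVec_eq_smul {Z : Matrix n n ℂ}
    (hZ : Z.IsHermitian) {a b : ℝ} (hab : a ≠ b) {u w : n → ℂ} (hu : Z *ᵥ u = a • u)
    (hw : Z *ᵥ w = b • w) : star w ⬝ᵥ u = 0 := by
  have h : (a : ℂ) * (star w ⬝ᵥ u) = b * (star w ⬝ᵥ u) :=
    calc (a : ℂ) * (star w ⬝ᵥ u) = star w ⬝ᵥ (Z *ᵥ u) := by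
          rw [hu, dotProduct_smul, Complex.real_smul]
      _ = star (Z *ᵥ w) ⬝ᵥ u := by rw [dotProduct_mulVec, star_mulVec, hZ.eq]
      _ = b * (star w ⬝ᵥ u) := by
          rw [hw, star_smul, smul_dotProduct, Complex.real_smul, star_trivial]
  exact (mul_eq_mul_right_iff.1 h).resolve_left (by exact_mod_cast hab)

variable [DecidableEq n]

theorem algebraMap_mulVec (r : ℝ) (v : n → ℂ) : algebraMap ℝ (Matrix n n ℂ) r *ᵥ v = r • v := by
  rw [Algebra.algebraMap_eq_smul_one, smul_mulVec, one_mulVec]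

theorem IsHermitian.le_algebraMap_iff {Z : Matrix n n ℂ} (hZ : Z.IsHermitian) {r : ℝ} :
    Z ≤ algebraMap ℝ _ r ↔ ∀ i, hZ.eigenvalues i ≤ r := by
  rw [le_algebraMap_iff_spectrum_le hZ.isSelfAdjoint, hZ.spectrum_real_eq_range_eigenvalues,
    Set.forall_mem_range]

theorem IsHermitian.algebraMap_le_iff {Z : Matrix n n ℂ} (hZ : Z.IsHermitian) {r : ℝ} :
    algebraMap ℝ _ r ≤ Z ↔ ∀ i, r ≤ hZ.eigenvalues i := by
  rw [algebraMap_le_iff_le_spectrum hZ.isSelfAdjoint, hZ.spectrum_real_eq_range_eigenvalues,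
    Set.forall_mem_range]

end Matrix

section HeisenbergDual

variable {n ι J : Type*} [Fintype n] [Fintype ι] [Fintype J]

def heisenbergDual (K : ι → J → Matrix n n ℂ) : Matrix n n ℂ →ₗ[ℂ] Matrix n n ℂ where
  toFun X := ∑ x, ∑ i, (K x i)ᴴ * X * K x i
  map_add' X Y := by simp only [mul_add, add_mul, Finset.sum_add_distrib]
  map_smul' c X := by
    simp only [mul_smul_comm, smul_mul_assoc, Finset.smul_sum, RingHom.id_apply]

variable (K : ι → J → Matrix n n ℂ)

theorem heisenbergDual_apply (X : Matrix n n ℂ) :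
    heisenbergDual K X = ∑ x, ∑ i, (K x i)ᴴ * X * K x i := rfl

theorem heisenbergDual_conjTranspose (X : Matrix n n ℂ) :
    heisenbergDual K Xᴴ = (heisenbergDual K X)ᴴ := by
  simp only [heisenbergDual_apply, conjTranspose_sum, conjTranspose_mul,
    conjTranspose_conjTranspose, Matrix.mul_assoc]

theorem heisenbergDual_one_eq_one [DecidableEq n] {A : ι → Matrix n n ℂ}
    (hK : ∀ x, A x = ∑ i, (K x i)ᴴ * K x i) (hA : ∑ x, A x = 1) : heisenbergDual K 1 = 1 := by
  simp only [heisenbergDual_apply, Matrix.mul_one, ← hK, hA]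

theorem Matrix.PosSemidef.mulVec_kraus_eq_zero {P : Matrix n n ℂ} (hP : P.PosSemidef)
    (hfix : heisenbergDual K P = P) {v : n → ℂ} (hv : P *ᵥ v = 0) (x : ι) (i : J) :
    P *ᵥ (K x i *ᵥ v) = 0 := by
  have hnonneg : ∀ x i, 0 ≤ star (K x i *ᵥ v) ⬝ᵥ (P *ᵥ (K x i *ᵥ v)) :=
    fun x i => hP.dotProduct_mulVec_nonneg _
  have hsum : ∑ x, ∑ i, star (K x i *ᵥ v) ⬝ᵥ (P *ᵥ (K x i *ᵥ v)) = 0 := by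
    calc _ = star v ⬝ᵥ (heisenbergDual K P *ᵥ v) := by
          simp only [heisenbergDual_apply, sum_mulVec, dotProduct_sum,
            star_dotProduct_conjTranspose_mul_mul_mulVec]
      _ = 0 := by rw [hfix, hv, dotProduct_zero]
  rw [← hP.dotProduct_mulVec_zero_iff]
  rw [Finset.sum_eq_zero_iff_of_nonneg fun x _ => Finset.sum_nonneg fun i _ => hnonneg x i] at hsum
  exact (Finset.sum_eq_zero_iff_of_nonneg fun i _ => hnonneg x i).1 (hsum x (Finset.mem_univ x)) i
    (Finset.mem_univ i)

end HeisenbergDual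

namespace InfoComplete

variable {d : ℕ} {ι : Type} [Fintype ι] {A : ι → Mat d}

theorem eq_of_posSemidef (hA : ∑ x, A x = 1) (hIC : InfoComplete A) {P N : Mat d}
    (hP : P.PosSemidef) (hN : N.PosSemidef) (h : ∀ x, (P * A x).trace = (N * A x).trace) :
    P = N := by
  have htrace : ∀ Y : Mat d, Y.trace = ∑ x, (Y * A x).trace := fun Y => by
    rw [← trace_sum, ← Matrix.mul_sum, hA, Matrix.mul_one]
  have htr : P.trace = N.trace := by
    rw [htrace P, htrace N]
    exact Finset.sum_congr rfl fun x _ => h x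
  by_cases h0 : P.trace = 0
  · rw [hP.trace_eq_zero_iff.1 h0, hN.trace_eq_zero_iff.1 (htr ▸ h0)]
  have hstate : ∀ Q : Mat d, Q.PosSemidef → Q.trace = P.trace → IsState ((P.trace)⁻¹ • Q) :=
    fun Q hQ hQP => ⟨hQ.smul (inv_nonneg.2 hP.trace_nonneg),
      by rw [trace_smul, hQP, smul_eq_mul, inv_mul_cancel₀ h0]⟩
  refine smul_right_injective _ (inv_ne_zero h0)
    (hIC _ _ (hstate P hP rfl) (hstate N hN htr.symm) fun x => ?_)
  simp only [smul_mul_assoc, trace_smul, h x]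

theorem eq_zero_of_trace_mul_eq_zero (hA : IsPOVM A) (hIC : InfoComplete A) {Y : Mat d}
    (hY : ∀ x, (Y * A x).trace = 0) : Y = 0 := by
  let S : Submodule ℂ (Mat d) :=
    ⨅ x, LinearMap.ker ((traceLinearMap (Fin d) ℂ ℂ).comp (LinearMap.mulRight ℂ (A x)))
  have hmem : ∀ Y, Y ∈ S ↔ ∀ x, (Y * A x).trace = 0 := by
    simp [S, Submodule.mem_iInf]
  suffices S ≤ ⊥ from (Submodule.mem_bot ℂ).1 (this ((hmem Y).2 hY))
  refine Submodule.le_of_forall_isSelfAdjoint_mem (fun B hB => ?_) (fun Z hZ hZsa => ?_)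
  · rw [hmem] at hB ⊢
    intro x
    rw [star_eq_conjTranspose, ← (hA.1 x).1.eq, ← conjTranspose_mul, trace_conjTranspose,
      trace_mul_comm, hB x, star_zero]
  · rw [hmem] at hZ
    rw [Submodule.mem_bot, ← CFC.posPart_sub_negPart Z hZsa, sub_eq_zero]
    refine hIC.eq_of_posSemidef hA.2 (nonneg_iff_posSemidef.1 (CFC.posPart_nonneg Z))
      (nonneg_iff_posSemidef.1 (CFC.negPart_nonneg Z)) fun x => ?_
    rw [← sub_eq_zero, ← trace_sub, ← Matrix.sub_mul, CFC.posPart_sub_negPart Z hZsa, hZ x]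

theorem eq_zero_or_eq_zero_of_star_dotProduct_mulVec_eq_zero (hA : IsPOVM A)
    (hIC : InfoComplete A) {u w : Fin d → ℂ} (h : ∀ x, star w ⬝ᵥ (A x *ᵥ u) = 0) :
    u = 0 ∨ w = 0 := by
  have := hIC.eq_zero_of_trace_mul_eq_zero hA (Y := vecMulVec u (star w)) fun x => by
    rw [vecMulVec_mul, trace_vecMulVec, dotProduct_comm, ← dotProduct_mulVec, h x]
  simpa using this

theorem mem_span_one_of_isHermitian_of_heisenbergDual_eq_self (hd : 0 < d) {J : Type}
    [Fintype J] {K : ι → J → Mat d} (hK : ∀ x, A x = ∑ i, (K x i)ᴴ * K x i)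
    (hA : IsPOVM A) (hIC : InfoComplete A) {Z : Mat d} (hZ : Z.IsHermitian)
    (hfix : heisenbergDual K Z = Z) : Z ∈ ℂ ∙ (1 : Mat d) := by
  have : Nonempty (Fin d) := Fin.pos_iff_nonempty.1 hd
  obtain ⟨iM, hiM⟩ := Finite.exists_max hZ.eigenvalues
  obtain ⟨im, him⟩ := Finite.exists_min hZ.eigenvalues
  set M := hZ.eigenvalues iM
  set m := hZ.eigenvalues im
  have hZM : Z ≤ algebraMap ℝ _ M := hZ.le_algebraMap_iff.2 hiM
  have hmZ : algebraMap ℝ _ m ≤ Z := hZ.algebraMap_le_iff.2 him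
  rcases eq_or_ne m M with hmM | hmM
  · refine Submodule.mem_span_singleton.2 ⟨M, ?_⟩
    rw [le_antisymm hZM (hmM ▸ hmZ), Algebra.algebraMap_eq_smul_one, Complex.coe_smul]
  exfalso
  have hfix_scalar (r : ℝ) : heisenbergDual K (algebraMap ℝ (Mat d) r) = algebraMap ℝ _ r := by
    rw [Algebra.algebraMap_eq_smul_one, LinearMap.map_smul_of_tower,
      heisenbergDual_one_eq_one K hK hA.2]
  set u := ⇑(hZ.eigenvectorBasis iM)
  set w := ⇑(hZ.eigenvectorBasis im)
  have hu : Z *ᵥ u = M • u := hZ.mulVec_eigenvectorBasis iM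
  have hw : Z *ᵥ w = m • w := hZ.mulVec_eigenvectorBasis im
  have hKu (x i) : Z *ᵥ (K x i *ᵥ u) = M • (K x i *ᵥ u) := by
    have := (le_iff.1 hZM).mulVec_kraus_eq_zero K (by rw [map_sub, hfix, hfix_scalar])
      (by rw [sub_mulVec, algebraMap_mulVec, hu, sub_self]) x i
    rwa [sub_mulVec, algebraMap_mulVec, sub_eq_zero, eq_comm] at this
  have hKw (x i) : Z *ᵥ (K x i *ᵥ w) = m • (K x i *ᵥ w) := by
    have := (le_iff.1 hmZ).mulVec_kraus_eq_zero K (by rw [map_sub, hfix, hfix_scalar])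
      (by rw [sub_mulVec, algebraMap_mulVec, hw, sub_self]) x i
    rwa [sub_mulVec, algebraMap_mulVec, sub_eq_zero] at this
  have hstat (x) : star w ⬝ᵥ (A x *ᵥ u) = 0 := by
    rw [hK x, sum_mulVec, dotProduct_sum]
    refine Finset.sum_eq_zero fun i _ => ?_
    rw [← Matrix.mul_one (K x i)ᴴ, star_dotProduct_conjTranspose_mul_mul_mulVec, one_mulVec]
    exact hZ.star_dotProduct_eq_zero_of_mulVec_eq_smul hmM.symm (hKu x i) (hKw x i)
  rcases hIC.eq_zero_or_eq_zero_of_star_dotProduct_mulVec_eq_zero hA hstat with h | h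
  · exact hZ.eigenvectorBasis.orthonormal.ne_zero iM (WithLp.ofLp_eq_zero 2 |>.1 h)
  · exact hZ.eigenvectorBasis.orthonormal.ne_zero im (WithLp.ofLp_eq_zero 2 |>.1 h)

end InfoComplete

theorem stmt6 {d : ℕ} (hd : 0 < d) {ι J : Type} [Fintype ι] [Fintype J]
    (A : ι → Mat d) (K : ι → J → Mat d)
    (hK : ∀ x, A x = ∑ i, (K x i)ᴴ * K x i)
    (hA : IsPOVM A) (hIC : InfoComplete A) :
    {X : Mat d | ∑ x, ∑ i, (K x i)ᴴ * X * K x i = X} =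
      {X : Mat d | ∃ c : ℂ, X = c • 1} := by
  have hfixed : (heisenbergDual K).eqLocus LinearMap.id ≤ ℂ ∙ (1 : Mat d) :=
    Submodule.le_of_forall_isSelfAdjoint_mem
      (fun X (hX : heisenbergDual K X = X) => show heisenbergDual K Xᴴ = Xᴴ by
        rw [heisenbergDual_conjTranspose, hX])
      fun Z hZ hZsa => hIC.mem_span_one_of_isHermitian_of_heisenbergDual_eq_self hd hK hA hZsa hZ
  ext X
  constructor
  · intro hX
    obtain ⟨c, hc⟩ := Submodule.mem_span_singleton.1 (hfixed hX)
    exact ⟨c, hc.symm⟩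
  · rintro ⟨c, rfl⟩
    exact (map_smul (heisenbergDual K) c 1).trans (by rw [heisenbergDual_one_eq_one K hK hA.2])
end

section
/- Let Λ be a channel on finite-dimensional H possessing a faithful invariant state (property F), with Kraus operators {K_i}. Then Fix(Λ*) = {K_i, K_i*}' , the commutant of the set of Kraus operators and their adjoints; in particular Fix(Λ*) is a *-subalgebra of B(H). -/
/-!
For a fixed point `X` of `Φ*(X) = ∑ Kᵢᴴ X Kᵢ`, trace preservation `∑ Kᵢᴴ Kᵢ = 1` turns the sum of
squares `∑ [X, Kᵢ]ᴴ [X, Kᵢ]` into the Kadison–Schwarz defect `Φ*(Xᴴ X) - Xᴴ X`, whose expectation in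
the invariant state `ρ₀` vanishes. The nonnegative terms `tr([X, Kᵢ] ρ₀ [X, Kᵢ]ᴴ)` therefore all
vanish, and faithfulness of `ρ₀` gives `[X, Kᵢ] = 0`. Fixed points are closed under `ᴴ`, so they
commute with the `Kᵢᴴ` as well; conversely, trace preservation makes every `X` commuting with the
`Kᵢ` a fixed point.
-/

open Matrix
open scoped ComplexOrder

theorem Matrix.PosDef.eq_zero_of_trace_mul_mul_conjTranspose_eq_zero {𝕜 m n : Type*} [RCLike 𝕜]
    [Fintype m] [Fintype n] {A : Matrix n n 𝕜} (hA : A.PosDef) {B : Matrix m n 𝕜}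
    (h : (B * A * Bᴴ).trace = 0) : B = 0 := by
  have hBAB : B * A * Bᴴ = 0 := (hA.posSemidef.mul_mul_conjTranspose_same B).trace_eq_zero_iff.1 h
  rw [← conjTranspose_eq_zero, ext_iff_mulVec]
  intro x
  by_contra hx
  have hquad : star (Bᴴ *ᵥ x) ⬝ᵥ (A *ᵥ (Bᴴ *ᵥ x)) = star x ⬝ᵥ ((B * A * Bᴴ) *ᵥ x) := by
    rw [star_mulVec, conjTranspose_conjTranspose, ← dotProduct_mulVec, mulVec_mulVec,
      mulVec_mulVec, Matrix.mul_assoc]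
  have hpos := hA.dotProduct_mulVec_pos (x := Bᴴ *ᵥ x) (by simpa using hx)
  rw [hquad, hBAB, zero_mulVec, dotProduct_zero] at hpos
  exact lt_irrefl 0 hpos

section Kraus

variable {R : Type*} {ι m n : Type*} [Fintype ι] [Fintype m]

theorem Matrix.trace_mul_sum_conjTranspose_mul_mul [Fintype n] [CommSemiring R] [StarRing R]
    (K : ι → Matrix m n R) (ρ : Matrix n n R) (A : Matrix m m R) :
    (ρ * ∑ i, (K i)ᴴ * A * K i).trace = ((∑ i, K i * ρ * (K i)ᴴ) * A).trace := by
  simp only [Finset.mul_sum, Finset.sum_mul, trace_sum]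
  refine Finset.sum_congr rfl fun i _ => ?_
  simp only [Matrix.mul_assoc]
  rw [trace_mul_comm (K i)]
  simp only [Matrix.mul_assoc]

theorem Matrix.sum_conjTranspose_mul_mul_conjTranspose [Semiring R] [StarRing R]
    (K : ι → Matrix m n R) (X : Matrix m m R) :
    ∑ i, (K i)ᴴ * Xᴴ * K i = (∑ i, (K i)ᴴ * X * K i)ᴴ := by
  simp [conjTranspose_sum, conjTranspose_mul, Matrix.mul_assoc]

theorem Matrix.sum_conjTranspose_commutator_mul_commutator [Ring R] [StarRing R]
    (K : ι → Matrix m m R) (X : Matrix m m R) :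
    ∑ i, (X * K i - K i * X)ᴴ * (X * K i - K i * X) =
      ∑ i, (K i)ᴴ * (Xᴴ * X) * K i - (∑ i, (K i)ᴴ * Xᴴ * K i) * X
        - Xᴴ * (∑ i, (K i)ᴴ * X * K i) + Xᴴ * (∑ i, (K i)ᴴ * K i) * X := by
  simp only [Finset.sum_mul, Finset.mul_sum, ← Finset.sum_sub_distrib, ← Finset.sum_add_distrib]
  refine Finset.sum_congr rfl fun i _ => ?_
  simp only [conjTranspose_sub, conjTranspose_mul]
  noncomm_ring

variable [DecidableEq m]

theorem Matrix.sum_conjTranspose_mul_mul_eq_self_of_commute [Semiring R] [StarRing R]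
    {K : ι → Matrix m m R} (hTP : ∑ i, (K i)ᴴ * K i = 1) {X : Matrix m m R}
    (hX : ∀ i, Commute X (K i)) :
    ∑ i, (K i)ᴴ * X * K i = X := by
  calc ∑ i, (K i)ᴴ * X * K i = (∑ i, (K i)ᴴ * K i) * X := by
        simp only [Finset.sum_mul, Matrix.mul_assoc, (hX _).eq]
    _ = X := by rw [hTP, Matrix.one_mul]

theorem Matrix.commute_of_sum_conjTranspose_mul_mul_eq_self {𝕜 : Type*} [RCLike 𝕜]
    {K : ι → Matrix m m 𝕜} (hTP : ∑ i, (K i)ᴴ * K i = 1) {ρ : Matrix m m 𝕜} (hρ : ρ.PosDef)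
    (hfix : ∑ i, K i * ρ * (K i)ᴴ = ρ) {X : Matrix m m 𝕜} (hX : ∑ i, (K i)ᴴ * X * K i = X)
    (i : ι) : Commute X (K i) := by
  set C : ι → Matrix m m 𝕜 := fun j => X * K j - K j * X
  have hdefect : ∑ j, (C j)ᴴ * C j = ∑ j, (K j)ᴴ * (Xᴴ * X) * K j - Xᴴ * X := by
    rw [sum_conjTranspose_commutator_mul_commutator, sum_conjTranspose_mul_mul_conjTranspose, hX,
      hTP]
    noncomm_ring
  have htrace : ∑ j, (C j * ρ * (C j)ᴴ).trace = 0 := by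
    calc ∑ j, (C j * ρ * (C j)ᴴ).trace = (ρ * ∑ j, (C j)ᴴ * C j).trace := by
          rw [Finset.mul_sum, trace_sum]
          exact Finset.sum_congr rfl fun j _ => by rw [trace_mul_cycle, trace_mul_comm]
      _ = 0 := by
          rw [hdefect, Matrix.mul_sub, trace_sub, trace_mul_sum_conjTranspose_mul_mul, hfix, sub_self]
  have hCi : (C i * ρ * (C i)ᴴ).trace = 0 :=
    (Finset.sum_eq_zero_iff_of_nonneg fun j _ =>
      (hρ.posSemidef.mul_mul_conjTranspose_same (C j)).trace_nonneg).1 htrace i (Finset.mem_univ i)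
  exact sub_eq_zero.1 (hρ.eq_zero_of_trace_mul_mul_conjTranspose_eq_zero hCi)

end Kraus

theorem stmt8_general {d : ℕ} {n : ℕ} (K : Fin n → Mat d)
    (hTP : ∑ i, (K i)ᴴ * K i = 1)
    (ρ₀ : Mat d) (hρ₀ : ρ₀.PosDef ∧ ρ₀.trace = 1)
    (hfix : ∑ i, K i * ρ₀ * (K i)ᴴ = ρ₀) :
    ({X : Mat d | ∑ i, (K i)ᴴ * X * K i = X} =
        {X : Mat d | ∀ i, Commute X (K i) ∧ Commute X ((K i)ᴴ)}) ∧
    (∀ X Y : Mat d, (∑ i, (K i)ᴴ * X * K i = X) → (∑ i, (K i)ᴴ * Y * K i = Y) →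
        (∑ i, (K i)ᴴ * (X * Y) * K i = X * Y)) ∧
    (∀ X : Mat d, (∑ i, (K i)ᴴ * X * K i = X) → (∑ i, (K i)ᴴ * Xᴴ * K i = Xᴴ)) ∧
    (∑ i, (K i)ᴴ * (1 : Mat d) * K i = 1) := by
  have hadj : ∀ X : Mat d, (∑ i, (K i)ᴴ * X * K i = X) → (∑ i, (K i)ᴴ * Xᴴ * K i = Xᴴ) :=
    fun X hX => by rw [sum_conjTranspose_mul_mul_conjTranspose, hX]
  have hcomm := fun X (hX : ∑ i, (K i)ᴴ * X * K i = X) =>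
    commute_of_sum_conjTranspose_mul_mul_eq_self hTP hρ₀.1 hfix hX
  have hfixed : ∀ X, (∀ i, Commute X (K i)) → ∑ i, (K i)ᴴ * X * K i = X :=
    fun X => sum_conjTranspose_mul_mul_eq_self_of_commute hTP
  refine ⟨?_, fun X Y hX hY => hfixed _ fun i => (hcomm X hX i).mul_left (hcomm Y hY i), hadj,
    hfixed 1 fun i => Commute.one_left _⟩
  ext X
  refine ⟨fun hX i => ⟨hcomm X hX i, (hcomm Xᴴ (hadj X hX) i).star_right⟩,
    fun hX => hfixed X fun i => (hX i).1⟩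

theorem stmt8 {d : ℕ} (hd : 0 < d) {n : ℕ} (K : Fin n → Mat d)
    (hTP : ∑ i, (K i)ᴴ * K i = 1)
    (ρ₀ : Mat d) (hρ₀ : ρ₀.PosDef ∧ ρ₀.trace = 1)
    (hfix : ∑ i, K i * ρ₀ * (K i)ᴴ = ρ₀) :
    ({X : Mat d | ∑ i, (K i)ᴴ * X * K i = X} =
        {X : Mat d | ∀ i, Commute X (K i) ∧ Commute X ((K i)ᴴ)}) ∧
    (∀ X Y : Mat d, (∑ i, (K i)ᴴ * X * K i = X) → (∑ i, (K i)ᴴ * Y * K i = Y) →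
        (∑ i, (K i)ᴴ * (X * Y) * K i = X * Y)) ∧
    (∀ X : Mat d, (∑ i, (K i)ᴴ * X * K i = X) → (∑ i, (K i)ᴴ * Xᴴ * K i = Xᴴ)) ∧
    (∑ i, (K i)ᴴ * (1 : Mat d) * K i = 1) :=
  stmt8_general K hTP ρ₀ hρ₀ hfix
end

section
/- Let A be a POVM and Λ a channel compatible with A. If Λ has a faithful invariant state, then Fix(Λ*) ⊆ {A(x)}'_{x}, i.e., every fixed point of Λ* commutes with every effect A(x). -/
/-!
Let `Λ*(X) = ∑ₖ Kₖᴴ X Kₖ`, unital because `∑ₓ A(x) = 1`. For a fixed point `Y` of `Λ*` (and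
hence also of `Yᴴ`) one computes `∑ₖ [Kₖ, Y]ᴴ [Kₖ, Y] = Λ*(YᴴY) - YᴴY`. Pairing with the
invariant state `ρ`, via `tr (ρ Λ*(Z)) = tr (Λ(ρ) Z)`, shows that the nonnegative numbers
`tr ([Kₖ, Y] ρ [Kₖ, Y]ᴴ)` sum to zero, and faithfulness of `ρ` forces `[Kₖ, Y] = 0`. Applied to
`Yᴴ` this gives `[Kₖᴴ, Y] = 0` as well, so `Y` commutes with every `A(x) = ∑ⱼ Kₓⱼᴴ Kₓⱼ`.
-/

open Matrix
open scoped ComplexOrder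

namespace Matrix

section Kraus

variable {n κ R : Type*} [Fintype n] [Fintype κ] [CommRing R] [StarRing R]

def krausMap (K : κ → Matrix n n R) (ρ : Matrix n n R) : Matrix n n R :=
  ∑ k, K k * ρ * (K k)ᴴ

def krausDual (K : κ → Matrix n n R) (X : Matrix n n R) : Matrix n n R :=
  ∑ k, (K k)ᴴ * X * K k

variable (K : κ → Matrix n n R)

lemma conjTranspose_krausDual (X : Matrix n n R) : (krausDual K X)ᴴ = krausDual K Xᴴ := by
  simp only [krausDual, conjTranspose_sum, conjTranspose_mul, conjTranspose_conjTranspose,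
    Matrix.mul_assoc]

lemma trace_mul_krausDual (ρ X : Matrix n n R) :
    (ρ * krausDual K X).trace = (krausMap K ρ * X).trace := by
  simp only [krausDual, krausMap, Finset.mul_sum, Finset.sum_mul, trace_sum]
  refine Finset.sum_congr rfl fun k _ => ?_
  rw [← Matrix.mul_assoc, ← Matrix.mul_assoc, trace_mul_cycle]
  simp only [Matrix.mul_assoc]

lemma sum_conjTranspose_commutator_mul_commutator_s9 [DecidableEq n]
    (hK : ∑ k, (K k)ᴴ * K k = 1) {Y : Matrix n n R} (hY : krausDual K Y = Y) :
    ∑ k, (K k * Y - Y * K k)ᴴ * (K k * Y - Y * K k) = krausDual K (Yᴴ * Y) - Yᴴ * Y := by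
  have hYH : krausDual K Yᴴ = Yᴴ := by rw [← conjTranspose_krausDual, hY]
  have expand : ∀ k, (K k * Y - Y * K k)ᴴ * (K k * Y - Y * K k) =
      Yᴴ * ((K k)ᴴ * K k) * Y - Yᴴ * ((K k)ᴴ * Y * K k) - (K k)ᴴ * Yᴴ * K k * Y
        + (K k)ᴴ * (Yᴴ * Y) * K k := by
    intro k
    simp only [conjTranspose_sub, conjTranspose_mul]
    noncomm_ring
  simp only [expand, Finset.sum_add_distrib, Finset.sum_sub_distrib, ← Finset.mul_sum,
    ← Finset.sum_mul]
  change Yᴴ * (∑ k, (K k)ᴴ * K k) * Y - Yᴴ * krausDual K Y - krausDual K Yᴴ * Y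
    + krausDual K (Yᴴ * Y) = _
  rw [hK, hY, hYH, Matrix.mul_one]
  abel

lemma sum_trace_commutator_mul_mul_conjTranspose_eq_zero [DecidableEq n]
    (hK : ∑ k, (K k)ᴴ * K k = 1) {ρ Y : Matrix n n R} (hρ : krausMap K ρ = ρ) (hY : krausDual K Y = Y) :
    ∑ k, ((K k * Y - Y * K k) * ρ * (K k * Y - Y * K k)ᴴ).trace = 0 := by
  calc ∑ k, ((K k * Y - Y * K k) * ρ * (K k * Y - Y * K k)ᴴ).trace
      = (ρ * ∑ k, (K k * Y - Y * K k)ᴴ * (K k * Y - Y * K k)).trace := by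
        simp only [Finset.mul_sum, trace_sum, trace_mul_cycle _ ρ, trace_mul_comm _ ρ]
    _ = 0 := by
        rw [sum_conjTranspose_commutator_mul_commutator_s9 K hK hY, Matrix.mul_sub, trace_sub,
          trace_mul_krausDual, hρ, sub_self]

end Kraus

section PosDef

variable {n κ 𝕜 : Type*} [Fintype n] [Fintype κ] [RCLike 𝕜]

lemma PosDef.eq_zero_of_trace_mul_mul_conjTranspose_eq_zero_s9 {ρ : Matrix n n 𝕜} (hρ : ρ.PosDef)
    {C : Matrix n n 𝕜} (h : (C * ρ * Cᴴ).trace = 0) : C = 0 := by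
  replace h := (hρ.posSemidef.mul_mul_conjTranspose_same C).trace_eq_zero_iff.mp h
  rw [← conjTranspose_eq_zero, ext_iff_mulVec]
  intro v
  by_contra hv
  rw [zero_mulVec] at hv
  have hpos := hρ.dotProduct_mulVec_pos hv
  simp only [star_mulVec, dotProduct_mulVec, vecMul_vecMul, conjTranspose_conjTranspose, h,
    vecMul_zero, zero_dotProduct, lt_self_iff_false] at hpos

variable [DecidableEq n] (K : κ → Matrix n n 𝕜) (hK : ∑ k, (K k)ᴴ * K k = 1) {ρ : Matrix n n 𝕜}
  (hρ : ρ.PosDef) (hρK : krausMap K ρ = ρ) {Y : Matrix n n 𝕜}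
include hK hρ hρK

lemma commute_of_krausDual_eq_self (hY : krausDual K Y = Y) (k : κ) : Commute (K k) Y := by
  have hnonneg : ∀ k ∈ Finset.univ, 0 ≤ ((K k * Y - Y * K k) * ρ * (K k * Y - Y * K k)ᴴ).trace :=
    fun k _ => (hρ.posSemidef.mul_mul_conjTranspose_same _).trace_nonneg
  have hzero := (Finset.sum_eq_zero_iff_of_nonneg hnonneg).mp
    (sum_trace_commutator_mul_mul_conjTranspose_eq_zero K hK hρK hY) k (Finset.mem_univ k)
  exact sub_eq_zero.mp (hρ.eq_zero_of_trace_mul_mul_conjTranspose_eq_zero_s9 hzero)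

lemma commute_conjTranspose_of_krausDual_eq_self (hY : krausDual K Y = Y) (k : κ) :
    Commute (K k)ᴴ Y := by
  have hYH : krausDual K Yᴴ = Yᴴ := by rw [← conjTranspose_krausDual, hY]
  simpa only [star_eq_conjTranspose, conjTranspose_conjTranspose] using
    (commute_of_krausDual_eq_self K hK hρ hρK hYH k).star_star

end PosDef

end Matrix

theorem stmt9_general {d : ℕ} {ι J : Type} [Fintype ι] [Fintype J]
    (A : ι → Mat d) (K : ι → J → Mat d)
    (hK : ∀ x, A x = ∑ j, (K x j)ᴴ * K x j)
    (hA : IsPOVM A)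
    (ρ₀ : Mat d) (hρ₀ : ρ₀.PosDef ∧ ρ₀.trace = 1)
    (hfix : ∑ x, ∑ j, K x j * ρ₀ * (K x j)ᴴ = ρ₀) :
    ∀ X : Mat d, (∑ x, ∑ j, (K x j)ᴴ * X * K x j = X) → ∀ x, Commute X (A x) := by
  intro X hX x
  let L : ι × J → Mat d := fun p => K p.1 p.2
  have hL : ∑ p, (L p)ᴴ * L p = 1 := by
    rw [Fintype.sum_prod_type, ← hA.2]
    exact Finset.sum_congr rfl fun x _ => (hK x).symm
  have hρL : krausMap L ρ₀ = ρ₀ := by rw [krausMap, Fintype.sum_prod_type, hfix]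
  have hXL : krausDual L X = X := by rw [krausDual, Fintype.sum_prod_type, hX]
  rw [hK x]
  refine Commute.sum_right _ _ _ fun j _ => Commute.mul_right ?_ ?_
  · exact (commute_conjTranspose_of_krausDual_eq_self L hL hρ₀.1 hρL hXL (x, j)).symm
  · exact (commute_of_krausDual_eq_self L hL hρ₀.1 hρL hXL (x, j)).symm

theorem stmt9 {d : ℕ} (hd : 0 < d) {ι J : Type} [Fintype ι] [Fintype J]
    (A : ι → Mat d) (K : ι → J → Mat d)
    (hK : ∀ x, A x = ∑ j, (K x j)ᴴ * K x j)
    (hA : IsPOVM A)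
    (ρ₀ : Mat d) (hρ₀ : ρ₀.PosDef ∧ ρ₀.trace = 1)
    (hfix : ∑ x, ∑ j, K x j * ρ₀ * (K x j)ᴴ = ρ₀) :
    ∀ X : Mat d, (∑ x, ∑ j, (K x j)ᴴ * X * K x j = X) → ∀ x, Commute X (A x) :=
  stmt9_general A K hK hA ρ₀ hρ₀ hfix
end

section
/- For any POVM A, the Lüders channel Λ_A^L(ρ) = Σ_x √A(x) ρ √A(x) satisfies Fix((Λ_A^L)*) = {A(x)}'_x, the commutant of the effects of A. -/
open Matrix
open scoped ComplexOrder

/-- The positive semidefinite square root (removed from Mathlib; old definition restored). -/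
noncomputable def Matrix.PosSemidef.sqrt {𝕜 : Type*} [RCLike 𝕜] {n : Type*} [Fintype n]
    [DecidableEq n] {A : Matrix n n 𝕜} (hA : A.PosSemidef) : Matrix n n 𝕜 :=
  hA.1.eigenvectorUnitary.1 * diagonal ((↑) ∘ (√·) ∘ hA.1.eigenvalues) *
  (star hA.1.eigenvectorUnitary : Matrix n n 𝕜)

/-!
Write `B x` for `√A(x)`: these are Hermitian with `∑ x, B x * B x = 1`. If `X` is fixed by the
Lüders map then so is `Xᴴ`, and expanding gives
`∑ x, [B x, X]ᴴ [B x, X] = ∑ x, B x (Xᴴ X) B x - Xᴴ X`, whose trace vanishes because the map is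
trace preserving. A vanishing sum of traces of the positive matrices `[B x, X]ᴴ [B x, X]` forces
every commutator to vanish. Finally `X` commutes with `√A(x)` iff it commutes with `A(x)`, since
`√A(x)` is a continuous function of `A(x)` and `A(x) = √A(x) ^ 2`.
-/

open Finset

namespace Matrix

variable {R n ι : Type*} [Fintype n] [DecidableEq n] [Fintype ι]

theorem sum_mul_mul_eq_self_of_commute [Semiring R] {B : ι → Matrix n n R}
    (hB : ∑ x, B x * B x = 1) {X : Matrix n n R} (hX : ∀ x, Commute X (B x)) :
    ∑ x, B x * X * B x = X :=
  calc ∑ x, B x * X * B x = ∑ x, B x * B x * X :=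
        sum_congr rfl fun x _ => by rw [Matrix.mul_assoc, (hX x).eq, Matrix.mul_assoc]
    _ = X := by rw [← Matrix.sum_mul, hB, Matrix.one_mul]

theorem trace_sum_mul_mul [CommSemiring R] {B : ι → Matrix n n R} (hB : ∑ x, B x * B x = 1)
    (Y : Matrix n n R) :
    (∑ x, B x * Y * B x).trace = Y.trace := by
  rw [trace_sum, sum_congr rfl fun x _ => trace_mul_cycle (B x) Y (B x), ← trace_sum,
    ← Matrix.sum_mul, hB, Matrix.one_mul]

variable [CommRing R] [StarRing R] {B : ι → Matrix n n R}

theorem sum_commutator_conjTranspose_mul_self (hBh : ∀ x, (B x)ᴴ = B x)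
    (hB : ∑ x, B x * B x = 1) {X : Matrix n n R} (hX : ∑ x, B x * X * B x = X) :
    ∑ x, (B x * X - X * B x)ᴴ * (B x * X - X * B x) = ∑ x, B x * (Xᴴ * X) * B x - Xᴴ * X := by
  have hXh : ∑ x, B x * Xᴴ * B x = Xᴴ := by
    simpa only [conjTranspose_sum, conjTranspose_mul, hBh, Matrix.mul_assoc] using
      congrArg conjTranspose hX
  have expand : ∀ x, (B x * X - X * B x)ᴴ * (B x * X - X * B x) =
      B x * (Xᴴ * X) * B x + Xᴴ * (B x * B x) * X - Xᴴ * (B x * X * B x)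
        - (B x * Xᴴ * B x) * X := by
    intro x
    simp only [conjTranspose_sub, conjTranspose_mul, hBh]
    noncomm_ring
  simp only [expand, sum_sub_distrib, sum_add_distrib, ← Matrix.mul_sum, ← Matrix.sum_mul, hB, hX,
    hXh, Matrix.mul_one]
  abel

variable [PartialOrder R] [StarOrderedRing R] [NoZeroDivisors R]

theorem commute_of_sum_mul_mul_eq_self (hBh : ∀ x, (B x)ᴴ = B x)
    (hB : ∑ x, B x * B x = 1) {X : Matrix n n R} (hX : ∑ x, B x * X * B x = X) (x : ι) :
    Commute X (B x) := by
  have htrace : ∑ x, ((B x * X - X * B x)ᴴ * (B x * X - X * B x)).trace = 0 := by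
    rw [← trace_sum, sum_commutator_conjTranspose_mul_self hBh hB hX, trace_sub,
      trace_sum_mul_mul hB, sub_self]
  have hzero := (sum_eq_zero_iff_of_nonneg fun x _ =>
    (posSemidef_conjTranspose_mul_self (B x * X - X * B x)).trace_nonneg).mp htrace x (mem_univ x)
  exact (sub_eq_zero.mp (trace_conjTranspose_mul_self_eq_zero_iff.mp hzero)).symm

theorem sum_mul_mul_eq_self_iff (hBh : ∀ x, (B x)ᴴ = B x) (hB : ∑ x, B x * B x = 1)
    (X : Matrix n n R) : ∑ x, B x * X * B x = X ↔ ∀ x, Commute X (B x) :=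
  ⟨commute_of_sum_mul_mul_eq_self hBh hB, sum_mul_mul_eq_self_of_commute hB⟩

end Matrix

namespace Matrix.PosSemidef

variable {𝕜 n : Type*} [RCLike 𝕜] [Fintype n] [DecidableEq n] {A : Matrix n n 𝕜}

theorem sqrt_eq_cfc (hA : A.PosSemidef) : hA.sqrt = cfc Real.sqrt A := by
  rw [hA.1.cfc_eq, IsHermitian.cfc, Unitary.conjStarAlgAut_apply, sqrt]

theorem conjTranspose_sqrt (hA : A.PosSemidef) : hA.sqrtᴴ = hA.sqrt := by
  rw [sqrt_eq_cfc]
  exact cfc_predicate (p := IsSelfAdjoint) Real.sqrt A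

theorem sqrt_mul_sqrt (hA : A.PosSemidef) : hA.sqrt * hA.sqrt = A := by
  have hA' : IsSelfAdjoint A := hA.1
  rw [sqrt_eq_cfc, ← cfc_mul Real.sqrt Real.sqrt A]
  conv_rhs => rw [← cfc_id' ℝ A]
  refine cfc_congr fun t ht => Real.mul_self_sqrt ?_
  rw [hA.1.spectrum_real_eq_range_eigenvalues] at ht
  obtain ⟨i, rfl⟩ := ht
  exact hA.eigenvalues_nonneg i

theorem commute_sqrt_iff (hA : A.PosSemidef) {X : Matrix n n 𝕜} :
    Commute X hA.sqrt ↔ Commute X A := by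
  refine ⟨fun h => hA.sqrt_mul_sqrt ▸ h.mul_right h, fun h => ?_⟩
  rw [sqrt_eq_cfc]
  exact (h.symm.cfc_real Real.sqrt).symm

end Matrix.PosSemidef

theorem stmt11_general {d : ℕ} {ι : Type} [Fintype ι]
    (A : ι → Mat d) (hA : IsPOVM A) :
    {X : Mat d | ∑ x, (hA.1 x).sqrt * X * (hA.1 x).sqrt = X} =
      {X : Mat d | ∀ x, Commute X (A x)} := by
  have hsum : ∑ x, (hA.1 x).sqrt * (hA.1 x).sqrt = 1 := by
    simpa only [PosSemidef.sqrt_mul_sqrt] using hA.2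
  ext X
  exact (sum_mul_mul_eq_self_iff (fun x => (hA.1 x).conjTranspose_sqrt) hsum X).trans
    (forall_congr' fun x => (hA.1 x).commute_sqrt_iff)

theorem stmt11 {d : ℕ} (hd : 0 < d) {ι : Type} [Fintype ι] [DecidableEq ι]
    (A : ι → Mat d) (hA : IsPOVM A) :
    {X : Mat d | ∑ x, (hA.1 x).sqrt * X * (hA.1 x).sqrt = X} =
      {X : Mat d | ∀ x, Commute X (A x)} :=
  stmt11_general A hA
end

section
/- Let Λ(ρ) = ½UρU* + ½VρV* on ℂ^N (N ≥ 3) with U the clock and V the shift matrix. Then every POVM effect A(x) of an observable compatible with Λ lies in the span of {1, U*V, V*U}; hence dim span(A) ≤ 3 and no informationally complete observable is compatible with Λ. -/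
open Matrix
open scoped ComplexOrder

/-!
For a linear functional `f` vanishing on `U` and `V`, evaluating both Kraus representations of `Λ`
on matrix units gives `∑ |f (K x j)|² = 0`; hence every Kraus operator is a combination of `U` and
`V`. Both are unitary, so `(K x j)ᴴ * K x j ∈ span {1, Uᴴ * V, Vᴴ * U}`. These three matrices have
constant diagonal (`U` is diagonal and `V` shifts), so no effect separates `|0⟩⟨0|` from `|1⟩⟨1|`.
-/

theorem Complex.star_exp_mul_exp_of_re_eq_zero {z : ℂ} (hz : z.re = 0) :
    star (Complex.exp z) * Complex.exp z = 1 := by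
  rw [Complex.star_def, Complex.conj_mul', Complex.norm_exp, hz]
  simp

namespace Matrix

variable {m n : Type*}

theorem mul_single_mul_conjTranspose_apply [Fintype n] [DecidableEq n]
    (K L : Matrix m n ℂ) (i k : m) (j l : n) :
    (K * single j l (1 : ℂ) * Lᴴ) i k = K i j * star (L k l) := by
  simp [mul_apply, single, ite_and]

section Kraus

variable [Fintype m] [Fintype n] [DecidableEq m] [DecidableEq n] {P Q : Type*} [Fintype P]
  [Fintype Q]

theorem map_eq_sum_mul_map_single (f : Matrix m n ℂ →ₗ[ℂ] ℂ) (K : Matrix m n ℂ) :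
    f K = ∑ i, ∑ j, K i j * f (single i j 1) := by
  conv_lhs => rw [matrix_eq_sum_single K]
  simp only [map_sum]
  refine Finset.sum_congr rfl fun i _ => Finset.sum_congr rfl fun j _ => ?_
  rw [← smul_eq_mul, ← map_smul, smul_single, smul_eq_mul, mul_one]

theorem sum_map_mul_star_map_eq (f g : Matrix m n ℂ →ₗ[ℂ] ℂ) (K K' : P → Matrix m n ℂ) :
    ∑ p, f (K p) * star (g (K' p)) = ∑ i, ∑ j, ∑ k, ∑ l,
      f (single i j 1) * star (g (single k l 1)) *
        (∑ p, K p * single j l (1 : ℂ) * (K' p)ᴴ) i k := by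
  have hf p := map_eq_sum_mul_map_single f (K p)
  have hg p := map_eq_sum_mul_map_single g (K' p)
  simp only [hf, hg, sum_apply, mul_single_mul_conjTranspose_apply, star_sum, star_mul',
    Finset.sum_mul]
  simp only [Finset.mul_sum]
  simp_rw [Finset.sum_comm (s := (Finset.univ : Finset P))]
  simp only [mul_comm, mul_left_comm, mul_assoc]

theorem sum_map_mul_star_map_eq_of_kraus {K K' : P → Matrix m n ℂ} {L L' : Q → Matrix m n ℂ}
    (h : ∀ ρ : Matrix n n ℂ, ∑ p, K p * ρ * (K' p)ᴴ = ∑ q, L q * ρ * (L' q)ᴴ)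
    (f g : Matrix m n ℂ →ₗ[ℂ] ℂ) :
    ∑ p, f (K p) * star (g (K' p)) = ∑ q, f (L q) * star (g (L' q)) := by
  simp only [sum_map_mul_star_map_eq, h]

theorem mem_span_of_kraus {K : P → Matrix m n ℂ} {L : Q → Matrix m n ℂ} (c : Q → ℂ)
    (h : ∀ ρ : Matrix n n ℂ, ∑ p, K p * ρ * (K p)ᴴ = ∑ q, c q • (L q * ρ * (L q)ᴴ)) (p : P) :
    K p ∈ Submodule.span ℂ (Set.range L) := by
  by_contra hp
  obtain ⟨f, hfp, hfL⟩ := Submodule.exists_dual_map_eq_bot_of_notMem hp inferInstance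
  have hL q : f (L q) = 0 := by
    have hq := Submodule.mem_map_of_mem (f := f)
      (Submodule.subset_span (Set.mem_range_self (f := L) q))
    rwa [hfL, Submodule.mem_bot] at hq
  have hsum : star (fun p => f (K p)) ⬝ᵥ (fun p => f (K p)) = 0 := by
    have := sum_map_mul_star_map_eq_of_kraus (K := K) (K' := K)
      (L := fun q => c q • L q) (L' := L) (fun ρ => by simpa only [smul_mul] using h ρ) f f
    simpa [dotProduct, mul_comm, hL] using this
  exact hfp (congrFun (dotProduct_star_self_eq_zero.1 hsum) p)

end Kraus

theorem conjTranspose_mul_self_mem_span_of_mem_span_pair [Fintype n] [DecidableEq n]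
    {U V K : Matrix n n ℂ} (hU : Uᴴ * U = 1) (hV : Vᴴ * V = 1)
    (hK : K ∈ Submodule.span ℂ {U, V}) :
    Kᴴ * K ∈ Submodule.span ℂ {1, Uᴴ * V, Vᴴ * U} := by
  obtain ⟨a, b, rfl⟩ := Submodule.mem_span_pair.1 hK
  have hexpand : (a • U + b • V)ᴴ * (a • U + b • V) =
      (star a * a + star b * b) • 1 + (star a * b) • (Uᴴ * V) + (star b * a) • (Vᴴ * U) := by
    simp only [conjTranspose_add, conjTranspose_smul, add_mul, mul_add, smul_mul_assoc,
      mul_smul_comm, hU, hV]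
    module
  rw [hexpand]
  refine add_mem (add_mem ?_ ?_) ?_ <;> refine Submodule.smul_mem _ _ (Submodule.subset_span ?_)
    <;> simp

theorem apply_self_eq_of_mem_span {S : Set (Matrix n n ℂ)} {i j : n}
    (hS : ∀ B ∈ S, B i i = B j j) {B : Matrix n n ℂ} (hB : B ∈ Submodule.span ℂ S) :
    B i i = B j j := by
  induction hB using Submodule.span_induction with
  | mem B hB => exact hS B hB
  | zero => rfl
  | add B C _ _ hB hC => simp [hB, hC]
  | smul c B _ hB => simp [hB]

theorem conjTranspose_diagonal_mul_self [Fintype n] [DecidableEq n] {d : n → ℂ}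
    (hd : ∀ i, star (d i) * d i = 1) : (diagonal d)ᴴ * diagonal d = 1 := by
  rw [diagonal_conjTranspose, diagonal_mul_diagonal, ← diagonal_one]
  exact congrArg diagonal (funext hd)

theorem conjTranspose_shift_mul_self {G : Type*} [AddGroup G] [Fintype G] [DecidableEq G]
    (g : G) :
    (of fun i j : G => if i = j + g then (1 : ℂ) else 0)ᴴ *
      of (fun i j : G => if i = j + g then (1 : ℂ) else 0) = 1 := by
  ext i j
  simp [mul_apply, one_apply, eq_comm]

end Matrix

theorem not_infoComplete_of_apply_self_eq {d : ℕ} {ι : Type} [Fintype ι] {A : ι → Mat d}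
    {i j : Fin d} (hij : i ≠ j) (hA : ∀ x, A x i i = A x j j) : ¬ InfoComplete A := by
  have hstate k : IsState (single k k 1 : Mat d) := by
    refine ⟨?_, trace_single_eq_same _ _⟩
    rw [← diagonal_single]
    exact PosSemidef.diagonal (Pi.single_nonneg.2 zero_le_one)
  intro hA_ic
  have hij_state := hA_ic _ _ (hstate i) (hstate j) fun x => by simp [trace_single_mul, hA]
  simpa [single_apply, hij.symm] using congrFun (congrFun hij_state i) i

theorem stmt16 (N : ℕ) [NeZero N] (hN : 3 ≤ N)
    (U V : Mat N)
    (hU : U = Matrix.diagonal (fun n : Fin N =>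
      Complex.exp (2 * Real.pi * Complex.I * (n : ℕ) / N)))
    (hV : V = Matrix.of (fun i j : Fin N => if i = j + 1 then (1 : ℂ) else 0))
    {ι J : Type} [Fintype ι] [Fintype J]
    (K : ι → J → Mat N) (A : ι → Mat N)
    (hKraus : ∀ ρ : Mat N, ∑ x, ∑ j, K x j * ρ * (K x j)ᴴ =
      (1/2 : ℂ) • (U * ρ * Uᴴ) + (1/2 : ℂ) • (V * ρ * Vᴴ))
    (hA : ∀ x, A x = ∑ j, (K x j)ᴴ * K x j) :
    (∀ x, A x ∈ Submodule.span ℂ ({1, Uᴴ * V, Vᴴ * U} : Set (Mat N))) ∧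
    Module.finrank ℂ (Submodule.span ℂ (Set.range A)) ≤ 3 ∧
    ¬ InfoComplete A := by
  have hUU : Uᴴ * U = 1 := hU ▸ conjTranspose_diagonal_mul_self fun n =>
    Complex.star_exp_mul_exp_of_re_eq_zero (by simp)
  have hVV : Vᴴ * V = 1 := hV ▸ conjTranspose_shift_mul_self 1
  have hK x j : K x j ∈ Submodule.span ℂ {U, V} := by
    have := mem_span_of_kraus (K := fun p : ι × J => K p.1 p.2) (L := ![U, V]) (fun _ => 1 / 2)
      (by simpa [Fintype.sum_prod_type, Fin.sum_univ_two] using hKraus) (x, j)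
    rwa [range_cons_cons_empty] at this
  have hmem x : A x ∈ Submodule.span ℂ ({1, Uᴴ * V, Vᴴ * U} : Set (Mat N)) := hA x ▸
    Submodule.sum_mem _ fun j _ => conjTranspose_mul_self_mem_span_of_mem_span_pair hUU hVV (hK x j)
  refine ⟨hmem, ?_, ?_⟩
  · calc Module.finrank ℂ (Submodule.span ℂ (Set.range A))
        ≤ Module.finrank ℂ (Submodule.span ℂ ({1, Uᴴ * V, Vᴴ * U} : Set (Mat N))) :=
          Submodule.finrank_mono (Submodule.span_le.2 (Set.range_subset_iff.2 hmem))
      _ ≤ 3 := (finrank_span_le_card _).trans (by simpa using Finset.card_le_three)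
  · have h10 : (1 : Fin N) ≠ 0 := by
      simp [Fin.ext_iff, Nat.mod_eq_of_lt (show 1 < N by omega)]
    have hshift_diag (k : Fin N) : V k k = 0 := by simp [hV, h10]
    refine not_infoComplete_of_apply_self_eq h10 fun x => apply_self_eq_of_mem_span ?_ (hmem x)
    rintro B (rfl | rfl | rfl) <;> simp [hU, hshift_diag]
end

section
/- Let H = ⊕_{n=1}^N H_n ⊗ K_n be an orthogonal decomposition of a finite-dimensional Hilbert space H with N ≥ 1. Then (dim H)² + 1 − Σ_n (dim K_n)² − Σ_n (dim H_n)² ≥ 0, i.e., dim(⊕_n B(H_n)⊗1) + dim(⊕_n 1⊗B(K_n)) ≤ (dim H)² + 1. -/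
/-!
Termwise, `(d² - 1)(e² - 1) ≥ 0` gives `d² + e² ≤ (de)² + 1`, so the left side is at most
`∑ xₙ² + N` with `xₙ = dₙeₙ ≥ 1`. Expanding `(∑ xₙ)²`, the `N² - N` cross terms are each at
least `1`, and `N² - N ≥ N - 1` absorbs the surplus.
-/

open Finset

theorem Nat.add_le_mul_add_one {x y : ℕ} (hx : 1 ≤ x) (hy : 1 ≤ y) : x + y ≤ x * y + 1 := by
  nlinarith [Nat.mul_le_mul (Nat.sub_le_sub_right hx 1) (Nat.sub_le_sub_right hy 1)]

theorem Finset.sum_sq_add_card_sq_le_sq_sum_add_card {ι : Type*} [DecidableEq ι]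
    (s : Finset ι) {a : ι → ℕ} (ha : ∀ i ∈ s, 1 ≤ a i) :
    ∑ i ∈ s, a i ^ 2 + #s ^ 2 ≤ (∑ i ∈ s, a i) ^ 2 + #s := by
  induction s using Finset.induction_on with
  | empty => simp
  | insert i s hi ih =>
    have ih := ih fun j hj => ha j (mem_insert_of_mem hj)
    have hcard : #s ≤ ∑ j ∈ s, a j := by
      simpa using card_nsmul_le_sum s a 1 fun j hj => ha j (mem_insert_of_mem hj)
    have hai := ha i (mem_insert_self i s)
    rw [sum_insert hi, sum_insert hi, card_insert_of_notMem hi]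
    nlinarith [Nat.mul_le_mul hcard hai]

theorem Finset.sum_sq_add_card_le_sq_sum_add_one {ι : Type*} [DecidableEq ι]
    (s : Finset ι) {a : ι → ℕ} (ha : ∀ i ∈ s, 1 ≤ a i) :
    ∑ i ∈ s, a i ^ 2 + #s ≤ (∑ i ∈ s, a i) ^ 2 + 1 := by
  nlinarith [s.sum_sq_add_card_sq_le_sq_sum_add_card ha, sq_nonneg ((#s : ℤ) - 1)]

theorem stmt18_general (N : ℕ) (dH dK : Fin N → ℕ)
    (hdH : ∀ n, 1 ≤ dH n) (hdK : ∀ n, 1 ≤ dK n) :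
    ∑ n, (dH n) ^ 2 + ∑ n, (dK n) ^ 2 ≤ (∑ n, dH n * dK n) ^ 2 + 1 := by
  calc ∑ n, dH n ^ 2 + ∑ n, dK n ^ 2 = ∑ n, (dH n ^ 2 + dK n ^ 2) := sum_add_distrib.symm
    _ ≤ ∑ n, ((dH n * dK n) ^ 2 + 1) := sum_le_sum fun n _ => by
      rw [mul_pow]
      exact Nat.add_le_mul_add_one (Nat.one_le_pow _ _ (hdH n)) (Nat.one_le_pow _ _ (hdK n))
    _ = ∑ n, (dH n * dK n) ^ 2 + #(univ : Finset (Fin N)) := by simp [sum_add_distrib]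
    _ ≤ (∑ n, dH n * dK n) ^ 2 + 1 :=
      univ.sum_sq_add_card_le_sq_sum_add_one fun n _ => Nat.mul_le_mul (hdH n) (hdK n)

theorem stmt18 (N : ℕ) (hN : 1 ≤ N) (dH dK : Fin N → ℕ)
    (hdH : ∀ n, 1 ≤ dH n) (hdK : ∀ n, 1 ≤ dK n) :
    ∑ n, (dH n) ^ 2 + ∑ n, (dK n) ^ 2 ≤ (∑ n, dH n * dK n) ^ 2 + 1 :=
  stmt18_general N dH dK hdH hdK
end
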